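/- arXiv:2312.17224 — 2 statements merged into one kernel-verified Lean document; each statement's English description precedes it below -/
import Mathlib

section
/- Let S be a Weyl-invariant finite multiset of arrows of Q^ab (i.e., of paths of length one). Then there exists a finite multiset S_P of directed paths of Q^ab, each of whose paths is a concatenation of arrows of S with every arrow of S used in exactly one path of S_P, such that S_P is Weyl-invariant and bipartite. -/
/-!
A path of `S` ending at a vertex `v` and one starting at `v` can be concatenated: this keeps the
arrows used and every `n_v`, and lowers the number of paths. Repeating this until no vertex has
both incoming and outgoing paths gives a bipartite multiset; it has the same `n_v` as `S`, hence
is Weyl-invariant. The two paths are distinct because `Q^ab`, like `Q`, is acyclic.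
-/

namespace QuiverSAGBI

/-- A quiver presented by a type of vertices, a type of arrows, and source and
target maps. -/
structure PreQuiver where
  V : Type
  A : Type
  src : A → V
  tgt : A → V

/-- A directed path: a nonempty list of composable arrows. -/
structure DPath (Q : PreQuiver) where
  arrows : List Q.A
  ne : arrows ≠ []
  chain : arrows.Chain' fun a b => Q.tgt a = Q.src b

/-- The source vertex of a path. -/
def DPath.srcV {Q : PreQuiver} (P : DPath Q) : Q.V := Q.src (P.arrows.head P.ne)

/-- The target vertex of a path. -/
def DPath.tgtV {Q : PreQuiver} (P : DPath Q) : Q.V := Q.tgt (P.arrows.getLast P.ne)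

/-- A quiver is acyclic if it has no directed path from a vertex to itself. -/
def IsAcyclic (Q : PreQuiver) : Prop := ∀ P : DPath Q, P.srcV ≠ P.tgtV

/-- `n_v(S)`: the number of paths of `S` with target `v` minus the number of
paths of `S` with source `v`. -/
noncomputable def nAt {Q : PreQuiver} (S : Multiset (DPath Q)) (v : Q.V) : ℤ :=
  (@Multiset.countP _ (fun P => DPath.tgtV P = v) (Classical.decPred _) S : ℤ) -
  (@Multiset.countP _ (fun P => DPath.srcV P = v) (Classical.decPred _) S : ℤ)

/-- A multiset of paths is bipartite if at every vertex, at most one of the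
number of incoming paths and the number of outgoing paths is nonzero. -/
def IsBipartite {Q : PreQuiver} (S : Multiset (DPath Q)) : Prop :=
  ∀ v : Q.V,
    @Multiset.countP _ (fun P => DPath.tgtV P = v) (Classical.decPred _) S = 0 ∨
    @Multiset.countP _ (fun P => DPath.srcV P = v) (Classical.decPred _) S = 0

/-- The base quiver on vertices `Fin n` and arrows `Fin m`. -/
def baseQuiver (n m : ℕ) (asrc atgt : Fin m → Fin n) : PreQuiver :=
  ⟨Fin n, Fin m, asrc, atgt⟩

/-- The abelianized quiver `Q^ab` of the quiver with vertices `Fin n`, arrows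
`Fin m` and dimension vector `r`: vertices are the lifts `(p, i)` with
`i : Fin (r p)`, and each arrow `a : p → q` has lifts `a_{ij} : p_i → q_j`. -/
def abQuiver (n m : ℕ) (asrc atgt : Fin m → Fin n) (r : Fin n → ℕ) : PreQuiver where
  V := Σ p : Fin n, Fin (r p)
  A := Σ a : Fin m, Fin (r (asrc a)) × Fin (r (atgt a))
  src := fun x => ⟨asrc x.1, x.2.1⟩
  tgt := fun x => ⟨atgt x.1, x.2.2⟩

/-- The length-one path consisting of a single arrow. -/
def singletonPath (Q : PreQuiver) (a : Q.A) : DPath Q :=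
  ⟨[a], by simp, by simp [List.Chain']⟩

namespace DPath

variable {Q : PreQuiver}

def comp (P P' : DPath Q) (h : P.tgtV = P'.srcV) : DPath Q where
  arrows := P.arrows ++ P'.arrows
  ne := by simp [P.ne]
  chain := P.chain.append P'.chain fun x hx y hy => by
    rw [List.getLast?_eq_some_getLast P.ne, Option.mem_def, Option.some.injEq] at hx
    rw [List.head?_eq_some_head P'.ne, Option.mem_def, Option.some.injEq] at hy
    exact hx ▸ hy ▸ h

@[simp]
lemma comp_srcV (P P' : DPath Q) (h : P.tgtV = P'.srcV) : (P.comp P' h).srcV = P.srcV :=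
  congrArg Q.src (List.head_append_of_ne_nil P.ne)

@[simp]
lemma comp_tgtV (P P' : DPath Q) (h : P.tgtV = P'.srcV) : (P.comp P' h).tgtV = P'.tgtV :=
  congrArg Q.tgt (List.getLast_append_of_ne_nil _ P'.ne)

def map {Q' : PreQuiver} (fV : Q.V → Q'.V) (fA : Q.A → Q'.A)
    (hsrc : ∀ a, Q'.src (fA a) = fV (Q.src a)) (htgt : ∀ a, Q'.tgt (fA a) = fV (Q.tgt a))
    (P : DPath Q) : DPath Q' where
  arrows := P.arrows.map fA
  ne := by simpa using P.ne
  chain := List.isChain_map_of_isChain fA (fun a b hab => by rw [htgt, hsrc, hab]) P.chain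

end DPath

variable {Q : PreQuiver}

lemma IsAcyclic.of_map {Q' : PreQuiver} (fV : Q.V → Q'.V) (fA : Q.A → Q'.A)
    (hsrc : ∀ a, Q'.src (fA a) = fV (Q.src a)) (htgt : ∀ a, Q'.tgt (fA a) = fV (Q.tgt a))
    (hQ' : IsAcyclic Q') : IsAcyclic Q := fun P hP => by
  refine hQ' (P.map fV fA hsrc htgt) ?_
  simp only [DPath.srcV, DPath.tgtV, DPath.map, List.head_map, List.getLast_map, hsrc, htgt]
  exact congrArg fV hP

lemma isAcyclic_abQuiver {n m : ℕ} {asrc atgt : Fin m → Fin n}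
    (hacyc : IsAcyclic (baseQuiver n m asrc atgt)) (r : Fin n → ℕ) :
    IsAcyclic (abQuiver n m asrc atgt r) :=
  hacyc.of_map Sigma.fst Sigma.fst (fun _ => rfl) (fun _ => rfl)

open Classical in
lemma nAt_cons (P : DPath Q) (S : Multiset (DPath Q)) (v : Q.V) :
    nAt (P ::ₘ S) v =
      nAt S v + ((if P.tgtV = v then 1 else 0) - (if P.srcV = v then 1 else 0)) := by
  simp only [nAt, Multiset.countP_cons]
  push_cast
  ring

lemma nAt_comp_cons (P P' : DPath Q) (h : P.tgtV = P'.srcV) (T : Multiset (DPath Q)) (v : Q.V) :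
    nAt (P.comp P' h ::ₘ T) v = nAt (P ::ₘ P' ::ₘ T) v := by
  rw [nAt_cons, nAt_cons, nAt_cons, DPath.comp_tgtV, DPath.comp_srcV, h]
  ring

def arrowSum (SP : Multiset (DPath Q)) : Multiset Q.A :=
  (SP.map fun P => (P.arrows : Multiset Q.A)).sum

lemma arrowSum_comp_cons (P P' : DPath Q) (h : P.tgtV = P'.srcV) (T : Multiset (DPath Q)) :
    arrowSum (P.comp P' h ::ₘ T) = arrowSum (P ::ₘ P' ::ₘ T) := by
  simp only [arrowSum, Multiset.map_cons, Multiset.sum_cons, DPath.comp, ← Multiset.coe_add,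
    add_assoc]

lemma arrowSum_map_singletonPath (S : Multiset Q.A) : arrowSum (S.map (singletonPath Q)) = S := by
  rw [arrowSum, Multiset.map_map]
  exact Multiset.sum_map_singleton S

lemma exists_eq_cons_cons_of_not_isBipartite (hQ : IsAcyclic Q) {SP : Multiset (DPath Q)}
    (hSP : ¬ IsBipartite SP) :
    ∃ (P P' : DPath Q) (T : Multiset (DPath Q)), P.tgtV = P'.srcV ∧ SP = P ::ₘ P' ::ₘ T := by
  simp only [IsBipartite, not_forall, not_or, Multiset.countP_eq_zero, not_not] at hSP
  obtain ⟨v, ⟨P, hP, hPv⟩, ⟨P', hP', hP'v⟩⟩ := hSP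
  have hne : P' ≠ P := fun hEq => hQ P' (hP'v.trans (hEq ▸ hPv).symm)
  obtain ⟨T₁, rfl⟩ := Multiset.exists_cons_of_mem hP
  obtain ⟨T, rfl⟩ := Multiset.exists_cons_of_mem ((Multiset.mem_cons.mp hP').resolve_left hne)
  exact ⟨P, P', T, hPv.trans hP'v.symm, rfl⟩

theorem exists_isBipartite_of_isAcyclic (hQ : IsAcyclic Q) (SP : Multiset (DPath Q)) :
    ∃ SP' : Multiset (DPath Q),
      arrowSum SP' = arrowSum SP ∧ (∀ v, nAt SP' v = nAt SP v) ∧ IsBipartite SP' := by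
  by_cases hSP : IsBipartite SP
  · exact ⟨SP, rfl, fun _ => rfl, hSP⟩
  obtain ⟨P, P', T, h, rfl⟩ := exists_eq_cons_cons_of_not_isBipartite hQ hSP
  obtain ⟨SP', hsum, hn, hbip⟩ := exists_isBipartite_of_isAcyclic hQ (P.comp P' h ::ₘ T)
  exact ⟨SP', hsum.trans (arrowSum_comp_cons P P' h T),
    fun v => (hn v).trans (nAt_comp_cons P P' h T v), hbip⟩
termination_by Multiset.card SP
decreasing_by subst_vars; simp

theorem statement1_general (n m : ℕ) (asrc atgt : Fin m → Fin n)
    (hacyc : IsAcyclic (baseQuiver n m asrc atgt))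
    (r : Fin n → ℕ)
    (S : Multiset ((abQuiver n m asrc atgt r).A))
    (hW : ∀ (p : Fin n) (i i' : Fin (r p)),
      nAt (S.map (singletonPath (abQuiver n m asrc atgt r))) ⟨p, i⟩ =
      nAt (S.map (singletonPath (abQuiver n m asrc atgt r))) ⟨p, i'⟩) :
    ∃ SP : Multiset (DPath (abQuiver n m asrc atgt r)),
      (SP.map fun P => (P.arrows : Multiset (abQuiver n m asrc atgt r).A)).sum
          = S ∧
      (∀ (p : Fin n) (i i' : Fin (r p)), nAt SP ⟨p, i⟩ = nAt SP ⟨p, i'⟩) ∧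
      IsBipartite SP := by
  obtain ⟨SP, hsum, hn, hbip⟩ := exists_isBipartite_of_isAcyclic
    (isAcyclic_abQuiver hacyc r) (S.map (singletonPath (abQuiver n m asrc atgt r)))
  refine ⟨SP, hsum.trans (arrowSum_map_singletonPath S), fun p i i' => ?_, hbip⟩
  exact (hn _).trans ((hW p i i').trans (hn _).symm)

/-- Let `S` be a Weyl-invariant finite multiset of arrows of
the abelianized quiver `Q^ab` (identified with single-arrow paths).  Then the
arrows of `S` can be partitioned into a finite multiset `SP` of directed paths
of `Q^ab` (each path a concatenation of arrows of `S`, every arrow of `S` used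
in exactly one path) such that `SP` is Weyl-invariant and bipartite. -/
theorem statement1 (n m : ℕ) (asrc atgt : Fin m → Fin n)
    (hacyc : IsAcyclic (baseQuiver n m asrc atgt))
    (r : Fin n → ℕ) (hr : ∀ p, 0 < r p)
    (S : Multiset ((abQuiver n m asrc atgt r).A))
    (hW : ∀ (p : Fin n) (i i' : Fin (r p)),
      nAt (S.map (singletonPath (abQuiver n m asrc atgt r))) ⟨p, i⟩ =
      nAt (S.map (singletonPath (abQuiver n m asrc atgt r))) ⟨p, i'⟩) :
    ∃ SP : Multiset (DPath (abQuiver n m asrc atgt r)),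
      (SP.map fun P => (P.arrows : Multiset (abQuiver n m asrc atgt r).A)).sum
          = S ∧
      (∀ (p : Fin n) (i i' : Fin (r p)), nAt SP ⟨p, i⟩ = nAt SP ⟨p, i'⟩) ∧
      IsBipartite SP :=
  statement1_general n m asrc atgt hacyc r S hW

end QuiverSAGBI
end

section
/- Let (T^-, T^+, σ) and (T_1^-, T_1^+, σ_1) be semi-standard linked tableaux pairs for the generalized Kronecker quiver. If T^- = T_1^- or T^+ = T_1^+, then the two pairs are equal (in particular σ = σ_1). -/
namespace QuiverSAGBI

/-- The variable `x^i_{jk}`: the `(j,k)` entry of the generic matrix `M_i`. -/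
abbrev KVar (K r0 r1 : ℕ) := Fin K × Fin r1 × Fin r0

/-- The coordinate ring of the representation space of the generalized
Kronecker quiver with `K` arrows and dimension vector `(r0, r1)`. -/
abbrev KPoly (K r0 r1 : ℕ) := MvPolynomial (KVar K r0 r1) ℂ

/-- `x_v` is a greater variable than `x_w`:  `v.1 < w.1`, or `v.1 = w.1` and
`v.2.1 < w.2.1`, or these agree and `v.2.2 < w.2.2`. -/
def VarGT {K r0 r1 : ℕ} (v w : KVar K r0 r1) : Prop :=
  v.1 < w.1 ∨ (v.1 = w.1 ∧ (v.2.1 < w.2.1 ∨ (v.2.1 = w.2.1 ∧ v.2.2 < w.2.2)))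

/-- The monomial with exponent vector `a` is smaller than the one with exponent
vector `b` in the lexicographic term order: at the most significant variable
where they differ, `a` has the smaller exponent. -/
def MonLT {K r0 r1 : ℕ} (a b : KVar K r0 r1 →₀ ℕ) : Prop :=
  ∃ v, a v < b v ∧ ∀ w, VarGT w v → a w = b w

/-- `mo` is the leading monomial (exponent vector) of `f`. -/
def IsLM {K r0 r1 : ℕ} (f : KPoly K r0 r1) (mo : KVar K r0 r1 →₀ ℕ) : Prop :=
  mo ∈ f.support ∧ ∀ m' ∈ f.support, m' = mo ∨ MonLT m' mo

/-- The substitution action of a pair of matrices `(g, h)` on the coordinate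
ring: `x^i_{jk} ↦ ∑ (h⁻¹)_{j j'} x^i_{j'k'} g_{k' k}`, i.e. `M_i ↦ h⁻¹ M_i g`. -/
noncomputable def glAct {K r0 r1 : ℕ} (g : Matrix (Fin r0) (Fin r0) ℂ)
    (h : Matrix (Fin r1) (Fin r1) ℂ) : KPoly K r0 r1 →ₐ[ℂ] KPoly K r0 r1 :=
  MvPolynomial.aeval fun v : KVar K r0 r1 =>
    ∑ j' : Fin r1, ∑ k' : Fin r0,
      MvPolynomial.C (h⁻¹ v.2.1 j' * g k' v.2.2) * MvPolynomial.X (v.1, j', k')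

/-- `f` is a semi-invariant of weight `(w0, w1)`. -/
def IsSemiInvariant {K r0 r1 : ℕ} (f : KPoly K r0 r1) (w0 w1 : ℤ) : Prop :=
  ∀ (g : Matrix (Fin r0) (Fin r0) ℂ) (h : Matrix (Fin r1) (Fin r1) ℂ),
    IsUnit g.det → IsUnit h.det →
      glAct g h f = MvPolynomial.C (g.det ^ w0 * h.det ^ w1) * f

/-- The semi-invariant ring: the linear span of all semi-invariants. -/
noncomputable def semiInvariantRing (K r0 r1 : ℕ) : Submodule ℂ (KPoly K r0 r1) :=
  Submodule.span ℂ {f | ∃ w0 w1 : ℤ, IsSemiInvariant f w0 w1}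

/-- A linked tableaux pair for the generalized Kronecker quiver:
`Tm` is the tableau `T⁻` (with `r0` rows and `cm` columns, labels `(i,q)`),
`Tp` is the tableau `T⁺` (with `r1` rows and `cp` columns, labels `(i,p)`),
and `link` is a bijection of boxes sending the box labeled `(i,q)` in row `p`
of `T⁻` to a box labeled `(i,p)` lying in row `q` of `T⁺`. -/
structure LinkedPair (K r0 r1 cm cp : ℕ) where
  Tm : Fin r0 → Fin cm → Fin K × Fin r1
  Tp : Fin r1 → Fin cp → Fin K × Fin r0
  link : Fin r0 × Fin cm ≃ Fin r1 × Fin cp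
  link_row : ∀ p c, (link (p, c)).1 = (Tm p c).2
  link_label : ∀ p c, Tp (link (p, c)).1 (link (p, c)).2 = ((Tm p c).1, p)

/-- The exponent vector of `Mon(T⁺)`: a box labeled `(i,k)` in row `q` of `T⁺`
contributes the variable `x^i_{qk}`. -/
noncomputable def monExpP {K r0 r1 cm cp : ℕ} (L : LinkedPair K r0 r1 cm cp) :
    KVar K r0 r1 →₀ ℕ :=
  ∑ q : Fin r1, ∑ c : Fin cp, Finsupp.single ((L.Tp q c).1, q, (L.Tp q c).2) 1

/-- The exponent vector of `Mon(T⁻)`: a box labeled `(i,j)` in row `p` of `T⁻`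
contributes the variable `x^i_{jp}`. -/
noncomputable def monExpM {K r0 r1 cm cp : ℕ} (L : LinkedPair K r0 r1 cm cp) :
    KVar K r0 r1 →₀ ℕ :=
  ∑ p : Fin r0, ∑ c : Fin cm, Finsupp.single ((L.Tm p c).1, (L.Tm p c).2, p) 1

/-- The semi-invariant `f_{T^±}` attached to a linked tableaux pair:
`∑_{α⁻, α⁺} sign(α⁻) sign(α⁺) Mon(α⁻ · α⁺ · T⁺)`, where `α⁺` permutes the
entries of each column of `T⁺` among its rows and `α⁻` permutes the second
entries of the labels of the boxes of `T⁺` linked to each column of `T⁻`. -/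
noncomputable def pairPoly {K r0 r1 cm cp : ℕ} (L : LinkedPair K r0 r1 cm cp) :
    KPoly K r0 r1 :=
  ∑ αm : Fin cm → Equiv.Perm (Fin r0), ∑ αp : Fin cp → Equiv.Perm (Fin r1),
    ((∏ l, (Equiv.Perm.sign (αm l) : ℤ)) * ∏ c, (Equiv.Perm.sign (αp c) : ℤ)) •
      ∏ p : Fin r0, ∏ l : Fin cm,
        MvPolynomial.X
          ((L.Tm p l).1, αp (L.link (p, l)).2 (L.link (p, l)).1, αm l p)

/-- The order on labels: `(i,p) ≤ (j,q)` iff `i < j`, or `i = j` and `p ≤ q`. -/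
def LabelLE {K n : ℕ} (a b : Fin K × Fin n) : Prop :=
  a.1 < b.1 ∨ (a.1 = b.1 ∧ a.2 ≤ b.2)

/-- Strict version of the label order. -/
def LabelLT {K n : ℕ} (a b : Fin K × Fin n) : Prop :=
  a.1 < b.1 ∨ (a.1 = b.1 ∧ a.2 < b.2)

/-- A rectangular tableau is semi-standard if its entries are weakly increasing
along each row and strictly increasing down each column. -/
def IsSemiStandardTab {rows cols K n : ℕ}
    (T : Fin rows → Fin cols → Fin K × Fin n) : Prop :=
  (∀ (i : Fin rows) (c c' : Fin cols), c ≤ c' → LabelLE (T i c) (T i c')) ∧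
  (∀ (c : Fin cols) (i i' : Fin rows), i < i' → LabelLT (T i c) (T i' c))

/-- The link is semi-standard: boxes with equal labels in the same row of `T⁻`
are matched with their partners in `T⁺` in a left-to-right
order-preserving way. -/
def IsSemiStandardLink {K r0 r1 cm cp : ℕ}
    (L : LinkedPair K r0 r1 cm cp) : Prop :=
  ∀ (p : Fin r0) (c c' : Fin cm), L.Tm p c = L.Tm p c' → c < c' →
    (L.link (p, c)).2 < (L.link (p, c')).2

/-- A semi-standard linked tableaux pair: both tableaux and the link are
semi-standard. -/
def IsSemiStandardPair {K r0 r1 cm cp : ℕ}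
    (L : LinkedPair K r0 r1 cm cp) : Prop :=
  IsSemiStandardTab L.Tm ∧ IsSemiStandardTab L.Tp ∧ IsSemiStandardLink L

/-- A (nonempty) semi-standard linked tableaux pair is primitive if its leading
monomial is not the product of the leading monomials of two (nonempty)
semi-standard linked tableaux pairs. -/
def IsPrimitive {K r0 r1 cm cp : ℕ} (L : LinkedPair K r0 r1 cm cp) : Prop :=
  IsSemiStandardPair L ∧ 0 < cm ∧
    ¬∃ (cm1 cp1 cm2 cp2 : ℕ) (L1 : LinkedPair K r0 r1 cm1 cp1)
        (L2 : LinkedPair K r0 r1 cm2 cp2) (m m1 m2 : KVar K r0 r1 →₀ ℕ),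
        0 < cm1 ∧ 0 < cm2 ∧ IsSemiStandardPair L1 ∧ IsSemiStandardPair L2 ∧
        IsLM (pairPoly L) m ∧ IsLM (pairPoly L1) m1 ∧ IsLM (pairPoly L2) m2 ∧
        m = m1 + m2

section Aux
open Finset

/-- A down-closed subset of `Fin m`: membership iff index below card. -/
lemma QS_mem_iff_lt_card {m : ℕ} {S : Finset (Fin m)}
    (hS : ∀ c ∈ S, ∀ c', c' ≤ c → c' ∈ S) (c : Fin m) :
    c ∈ S ↔ (c : ℕ) < S.card := by
  constructor
  · intro h
    have hsub : Finset.Iic c ⊆ S := fun x hx => hS c h x (Finset.mem_Iic.mp hx)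
    have := Finset.card_le_card hsub
    rw [Fin.card_Iic] at this
    omega
  · intro h
    by_contra hc
    have hsub : S ⊆ Finset.Iio c := by
      intro x hx
      rw [Finset.mem_Iio]
      by_contra hxc
      exact hc (hS x hx c (le_of_not_gt hxc))
    have := Finset.card_le_card hsub
    rw [Fin.card_Iio] at this
    omega

/-- Two monotone `ℕ`-valued sequences with the same value counts are equal. -/
lemma QS_mono_count_eq {m : ℕ} (f g : Fin m → ℕ)
    (hf : Monotone f) (hg : Monotone g)
    (hcount : ∀ a, (univ.filter (fun c => f c = a)).card
      = (univ.filter (fun c => g c = a)).card) : f = g := by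
  have hle : ∀ a, (univ.filter (fun c => f c ≤ a)).card
      = (univ.filter (fun c => g c ≤ a)).card := by
    intro a
    induction a with
    | zero => simpa [Nat.le_zero] using hcount 0
    | succ a ih =>
      have hsplit : ∀ h : Fin m → ℕ, univ.filter (fun c => h c ≤ a + 1)
          = univ.filter (fun c => h c ≤ a) ∪ univ.filter (fun c => h c = a + 1) := by
        intro h
        ext x
        simp only [Finset.mem_filter, Finset.mem_union, Finset.mem_univ, true_and]
        omega
      have hdisj : ∀ h : Fin m → ℕ,
          Disjoint (univ.filter (fun c => h c ≤ a)) (univ.filter (fun c => h c = a + 1)) := by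
        intro h
        rw [Finset.disjoint_left]
        intro x hx hx'
        simp only [Finset.mem_filter] at hx hx'
        omega
      rw [hsplit f, hsplit g, Finset.card_union_of_disjoint (hdisj f),
        Finset.card_union_of_disjoint (hdisj g), ih, hcount (a + 1)]
  have key : ∀ (c : Fin m) (a : ℕ), f c ≤ a ↔ g c ≤ a := by
    intro c a
    have hdf : ∀ x ∈ univ.filter (fun c => f c ≤ a), ∀ x', x' ≤ x →
        x' ∈ univ.filter (fun c => f c ≤ a) := by
      intro x hx x' hx'
      simp only [Finset.mem_filter, Finset.mem_univ, true_and] at hx ⊢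
      exact le_trans (hf hx') hx
    have hdg : ∀ x ∈ univ.filter (fun c => g c ≤ a), ∀ x', x' ≤ x →
        x' ∈ univ.filter (fun c => g c ≤ a) := by
      intro x hx x' hx'
      simp only [Finset.mem_filter, Finset.mem_univ, true_and] at hx ⊢
      exact le_trans (hg hx') hx
    constructor
    · intro h
      have : c ∈ univ.filter (fun c => f c ≤ a) := by simp [h]
      rw [QS_mem_iff_lt_card hdf, hle a, ← QS_mem_iff_lt_card hdg] at this
      simpa using this
    · intro h
      have : c ∈ univ.filter (fun c => g c ≤ a) := by simp [h]
      rw [QS_mem_iff_lt_card hdg, ← hle a, ← QS_mem_iff_lt_card hdf] at this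
      simpa using this
  funext c
  exact le_antisymm ((key c (g c)).mpr le_rfl) ((key c (f c)).mp le_rfl)

/-- Numerical encoding of a label. -/
def QSlab {K n : ℕ} (a : Fin K × Fin n) : ℕ := a.1.val * n + a.2.val

lemma QSlab_lt {K n : ℕ} {a b : Fin K × Fin n} (h : LabelLT a b) : QSlab a < QSlab b := by
  rcases h with h | ⟨h, h2⟩
  · have hb : (a.2 : ℕ) < n := a.2.isLt
    have hv : a.1.val < b.1.val := h
    have key : (a.1.val + 1) * n ≤ b.1.val * n := Nat.mul_le_mul_right n hv
    unfold QSlab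
    nlinarith
  · unfold QSlab
    rw [h]
    omega

lemma QSlab_le {K n : ℕ} {a b : Fin K × Fin n} (h : LabelLE a b) : QSlab a ≤ QSlab b := by
  rcases h with h | ⟨h, h2⟩
  · exact le_of_lt (QSlab_lt (Or.inl h))
  · unfold QSlab; rw [h]; omega

lemma QSlab_inj {K n : ℕ} {a b : Fin K × Fin n} (h : QSlab a = QSlab b) : a = b := by
  rcases lt_trichotomy a.1 b.1 with h1 | h1 | h1
  · exact absurd h (ne_of_lt (QSlab_lt (Or.inl h1)))
  · rcases lt_trichotomy a.2 b.2 with h2 | h2 | h2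
    · exact absurd h (ne_of_lt (QSlab_lt (Or.inr ⟨h1, h2⟩)))
    · exact Prod.ext h1 h2
    · exact absurd h.symm (ne_of_lt (QSlab_lt (Or.inr ⟨h1.symm, h2⟩)))
  · exact absurd h.symm (ne_of_lt (QSlab_lt (Or.inl h1)))

/-- Ranks are preserved by strictly monotone surjections between finsets. -/
lemma QS_rank_eq {m n : ℕ} {C : Finset (Fin m)} {D : Finset (Fin n)} {φ : Fin m → Fin n}
    (hmem : ∀ c ∈ C, φ c ∈ D)
    (hmono : ∀ c ∈ C, ∀ c' ∈ C, c < c' → φ c < φ c')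
    (hsurj : ∀ d ∈ D, ∃ c ∈ C, φ c = d)
    {c : Fin m} (hc : c ∈ C) :
    (C.filter (fun x => x < c)).card = (D.filter (fun y => y < φ c)).card := by
  refine Finset.card_bij (fun x _ => φ x) ?_ ?_ ?_
  · intro x hx
    simp only [Finset.mem_filter] at hx ⊢
    exact ⟨hmem x hx.1, hmono x hx.1 c hc hx.2⟩
  · intro x1 hx1 x2 hx2 hEq
    simp only [Finset.mem_filter] at hx1 hx2
    rcases lt_trichotomy x1 x2 with h | h | h
    · exact absurd hEq (ne_of_lt (hmono x1 hx1.1 x2 hx2.1 h))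
    · exact h
    · exact absurd hEq.symm (ne_of_lt (hmono x2 hx2.1 x1 hx1.1 h))
  · intro d hd
    simp only [Finset.mem_filter] at hd
    obtain ⟨x, hxC, hxd⟩ := hsurj d hd.1
    have hxc : x < c := by
      rcases lt_trichotomy x c with h | h | h
      · exact h
      · exfalso; subst h; rw [hxd] at hd; exact lt_irrefl d hd.2
      · exfalso
        have := hmono c hc x hxC h
        rw [hxd] at this
        exact absurd hd.2 (asymm this)
    exact ⟨x, Finset.mem_filter.mpr ⟨hxC, hxc⟩, hxd⟩

lemma QS_rank_inj {n : ℕ} {D : Finset (Fin n)} {d1 d2 : Fin n}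
    (h1 : d1 ∈ D) (h2 : d2 ∈ D)
    (h : (D.filter (fun y => y < d1)).card = (D.filter (fun y => y < d2)).card) :
    d1 = d2 := by
  have key : ∀ e1 ∈ D, ∀ e2 ∈ D, e1 < e2 →
      (D.filter (fun y => y < e1)).card < (D.filter (fun y => y < e2)).card := by
    intro e1 he1 e2 he2 hlt
    apply Finset.card_lt_card
    constructor
    · intro y hy
      simp only [Finset.mem_filter] at hy ⊢
      exact ⟨hy.1, lt_trans hy.2 hlt⟩
    · intro hsub
      have : e1 ∈ D.filter (fun y => y < e1) := hsub (Finset.mem_filter.mpr ⟨he1, hlt⟩)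
      simp at this
  rcases lt_trichotomy d1 d2 with hlt | hEq | hlt
  · exact absurd h (ne_of_lt (key d1 h1 d2 h2 hlt))
  · exact hEq
  · exact absurd h.symm (ne_of_lt (key d2 h2 d1 h1 hlt))

end Aux

section Main
open Finset

variable {K r0 r1 cm cp : ℕ}

lemma QS_ext (L L' : LinkedPair K r0 r1 cm cp) (h1 : L.Tm = L'.Tm)
    (h2 : L.Tp = L'.Tp) (h3 : L.link = L'.link) : L = L' := by
  rcases L with ⟨a, b, c, _, _⟩
  rcases L' with ⟨a', b', c', _, _⟩
  simp only [LinkedPair.mk.injEq]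
  exact ⟨h1, h2, h3⟩

lemma QS_link_mem (L : LinkedPair K r0 r1 cm cp) {i : Fin K} {p : Fin r0} {q : Fin r1}
    {c : Fin cm} (h : L.Tm p c = (i, q)) :
    (L.link (p, c)).1 = q ∧ L.Tp q (L.link (p, c)).2 = (i, p) := by
  have h1 : (L.link (p, c)).1 = q := by rw [L.link_row p c, h]
  refine ⟨h1, ?_⟩
  have := L.link_label p c
  rw [h1, h] at this
  exact this

lemma QS_link_surj (L : LinkedPair K r0 r1 cm cp) {i : Fin K} {p : Fin r0} {q : Fin r1}
    {d : Fin cp} (h : L.Tp q d = (i, p)) :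
    ∃ c : Fin cm, L.Tm p c = (i, q) ∧ L.link (p, c) = (q, d) := by
  rcases hpc : L.link.symm (q, d) with ⟨p0, c⟩
  have hlk : L.link (p0, c) = (q, d) := by
    rw [← hpc]; exact L.link.apply_symm_apply (q, d)
  have hlab := L.link_label p0 c
  rw [hlk] at hlab
  simp only at hlab
  rw [h] at hlab
  have hi : (L.Tm p0 c).1 = i := congrArg Prod.fst hlab.symm
  have hp : p0 = p := congrArg Prod.snd hlab.symm
  subst hp
  have hrow := L.link_row p0 c
  rw [hlk] at hrow
  refine ⟨c, ?_, hlk⟩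
  exact Prod.ext hi hrow.symm

/-- Transport of label counts along the link. -/
lemma QS_count (L : LinkedPair K r0 r1 cm cp) (i : Fin K) (p : Fin r0) (q : Fin r1) :
    (univ.filter (fun c : Fin cm => L.Tm p c = (i, q))).card
      = (univ.filter (fun d : Fin cp => L.Tp q d = (i, p))).card := by
  refine Finset.card_bij (fun c _ => (L.link (p, c)).2) ?_ ?_ ?_
  · intro c hc
    simp only [Finset.mem_filter, Finset.mem_univ, true_and] at hc ⊢
    exact (QS_link_mem L hc).2
  · intro c1 hc1 c2 hc2 hEq
    simp only [Finset.mem_filter, Finset.mem_univ, true_and] at hc1 hc2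
    have e1 := (QS_link_mem L hc1).1
    have e2 := (QS_link_mem L hc2).1
    have : L.link (p, c1) = L.link (p, c2) := Prod.ext (e1.trans e2.symm) hEq
    exact congrArg Prod.snd (L.link.injective this)
  · intro d hd
    simp only [Finset.mem_filter, Finset.mem_univ, true_and] at hd
    obtain ⟨c, hc, hlk⟩ := QS_link_surj L hd
    exact ⟨c, by simp [hc], by show (L.link (p, c)).2 = d; rw [hlk]⟩

/-- The key uniqueness lemma: same `T⁻` forces everything equal. -/
lemma QS_main (L L' : LinkedPair K r0 r1 cm cp)
    (hL : IsSemiStandardPair L) (hL' : IsSemiStandardPair L')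
    (hTm : L.Tm = L'.Tm) : L = L' := by
  -- counts of labels in the rows of T⁺ agree
  have hcnt : ∀ (q : Fin r1) (ℓ : Fin K × Fin r0),
      (univ.filter (fun d : Fin cp => L.Tp q d = ℓ)).card
        = (univ.filter (fun d : Fin cp => L'.Tp q d = ℓ)).card := by
    intro q ℓ
    rw [← QS_count L ℓ.1 ℓ.2 q, ← QS_count L' ℓ.1 ℓ.2 q, hTm]
  -- T⁺ agree
  have hTp : L.Tp = L'.Tp := by
    funext q d
    have hmonoF : Monotone (fun d => QSlab (L.Tp q d)) := by
      intro d d' hdd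
      exact QSlab_le (hL.2.1.1 q d d' hdd)
    have hmonoG : Monotone (fun d => QSlab (L'.Tp q d)) := by
      intro d d' hdd
      exact QSlab_le (hL'.2.1.1 q d d' hdd)
    have hcount : ∀ a, (univ.filter (fun d : Fin cp => QSlab (L.Tp q d) = a)).card
        = (univ.filter (fun d : Fin cp => QSlab (L'.Tp q d) = a)).card := by
      intro a
      by_cases ha : ∃ ℓ : Fin K × Fin r0, QSlab ℓ = a
      · obtain ⟨ℓ, rfl⟩ := ha
        have e1 : (univ.filter (fun d : Fin cp => QSlab (L.Tp q d) = QSlab ℓ))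
            = univ.filter (fun d : Fin cp => L.Tp q d = ℓ) := by
          ext d; simp only [Finset.mem_filter]
          exact ⟨fun ⟨h1, h2⟩ => ⟨h1, QSlab_inj h2⟩, fun ⟨h1, h2⟩ => ⟨h1, by rw [h2]⟩⟩
        have e2 : (univ.filter (fun d : Fin cp => QSlab (L'.Tp q d) = QSlab ℓ))
            = univ.filter (fun d : Fin cp => L'.Tp q d = ℓ) := by
          ext d; simp only [Finset.mem_filter]
          exact ⟨fun ⟨h1, h2⟩ => ⟨h1, QSlab_inj h2⟩, fun ⟨h1, h2⟩ => ⟨h1, by rw [h2]⟩⟩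
        rw [e1, e2]; exact hcnt q ℓ
      · have e1 : (univ.filter (fun d : Fin cp => QSlab (L.Tp q d) = a)) = ∅ := by
          rw [Finset.filter_eq_empty_iff]
          intro d _ hd
          exact ha ⟨L.Tp q d, hd⟩
        have e2 : (univ.filter (fun d : Fin cp => QSlab (L'.Tp q d) = a)) = ∅ := by
          rw [Finset.filter_eq_empty_iff]
          intro d _ hd
          exact ha ⟨L'.Tp q d, hd⟩
        rw [e1, e2]
    have := QS_mono_count_eq _ _ hmonoF hmonoG hcount
    exact QSlab_inj (congrFun this d)
  -- links agree
  have hlink : L.link = L'.link := by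
    apply Equiv.ext
    rintro ⟨p, c⟩
    rcases hiq : L.Tm p c with ⟨i, q⟩
    have hTmpc : L.Tm p c = (i, q) := hiq
    have hTmpc' : L'.Tm p c = (i, q) := by rw [← hTm]; exact hTmpc
    set C : Finset (Fin cm) := univ.filter (fun x => L.Tm p x = (i, q)) with hC
    set D : Finset (Fin cp) := univ.filter (fun y => L.Tp q y = (i, p)) with hD
    have hcC : c ∈ C := by simp [hC, hTmpc]
    have hprops : ∀ (M : LinkedPair K r0 r1 cm cp), IsSemiStandardPair M →
        M.Tm = L.Tm → M.Tp = L.Tp →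
        (∀ x ∈ C, (M.link (p, x)).2 ∈ D) ∧
        (∀ x ∈ C, ∀ x' ∈ C, x < x' → (M.link (p, x)).2 < (M.link (p, x')).2) ∧
        (∀ d ∈ D, ∃ x ∈ C, (M.link (p, x)).2 = d) := by
      intro M hM hMm hMp
      refine ⟨?_, ?_, ?_⟩
      · intro x hx
        simp only [hC, Finset.mem_filter, Finset.mem_univ, true_and] at hx
        have := (QS_link_mem M (hMm ▸ hx)).2
        simp [hD, ← hMp, this]
      · intro x hx x' hx' hlt
        simp only [hC, Finset.mem_filter, Finset.mem_univ, true_and] at hx hx'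
        exact hM.2.2 p x x' (by rw [hMm, hx, hx']) hlt
      · intro d hd
        simp only [hD, Finset.mem_filter, Finset.mem_univ, true_and] at hd
        obtain ⟨x, hx, hlk⟩ := QS_link_surj M (hMp ▸ hd)
        exact ⟨x, by simp [hC, ← hMm, hx], by rw [hlk]⟩
    obtain ⟨m1, m2, m3⟩ := hprops L hL rfl rfl
    obtain ⟨n1, n2, n3⟩ := hprops L' hL' hTm.symm hTp.symm
    have hr1 := QS_rank_eq m1 m2 m3 hcC
    have hr2 := QS_rank_eq n1 n2 n3 hcC
    have h2 : (L.link (p, c)).2 = (L'.link (p, c)).2 :=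
      QS_rank_inj (m1 c hcC) (n1 c hcC) (hr1.symm.trans hr2)
    have h1 : (L.link (p, c)).1 = (L'.link (p, c)).1 := by
      rw [L.link_row, L'.link_row, hTm]
    exact Prod.ext h1 h2
  exact QS_ext L L' hTm hTp hlink

/-- Flip a linked pair, exchanging the two tableaux. -/
def QSflip (L : LinkedPair K r0 r1 cm cp) : LinkedPair K r1 r0 cp cm where
  Tm := L.Tp
  Tp := L.Tm
  link := L.link.symm
  link_row := by
    intro q c
    rcases hpl : L.link.symm (q, c) with ⟨p, l⟩
    have hlk : L.link (p, l) = (q, c) := by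
      rw [← hpl]; exact L.link.apply_symm_apply (q, c)
    have := L.link_label p l
    rw [hlk] at this
    rw [this]
  link_label := by
    intro q c
    rcases hpl : L.link.symm (q, c) with ⟨p, l⟩
    have hlk : L.link (p, l) = (q, c) := by
      rw [← hpl]; exact L.link.apply_symm_apply (q, c)
    have hlab := L.link_label p l
    rw [hlk] at hlab
    have hrow := L.link_row p l
    rw [hlk] at hrow
    simp only
    apply Prod.ext
    · rw [hlab]
    · exact hrow.symm

lemma QSflip_ss {L : LinkedPair K r0 r1 cm cp} (hL : IsSemiStandardPair L) :
    IsSemiStandardPair (QSflip L) := by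
  refine ⟨hL.2.1, hL.1, ?_⟩
  intro q c c' hEq hlt
  have hEq' : L.Tp q c = L.Tp q c' := hEq
  show (L.link.symm (q, c)).2 < (L.link.symm (q, c')).2
  rcases hpl : L.link.symm (q, c) with ⟨p, l⟩
  rcases hpl' : L.link.symm (q, c') with ⟨p', l'⟩
  have hlk : L.link (p, l) = (q, c) := by
    rw [← hpl]; exact L.link.apply_symm_apply (q, c)
  have hlk' : L.link (p', l') = (q, c') := by
    rw [← hpl']; exact L.link.apply_symm_apply (q, c')
  have hlab := L.link_label p l
  have hlab' := L.link_label p' l'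
  rw [hlk] at hlab; rw [hlk'] at hlab'
  simp only at hlab hlab'
  have hpp : p = p' := by
    have : ((L.Tm p l).1, p) = ((L.Tm p' l').1, p') := by
      rw [← hlab, ← hlab']; exact hEq'
    exact congrArg Prod.snd this
  subst hpp
  have hTmEq : L.Tm p l = L.Tm p l' := by
    apply Prod.ext
    · have : ((L.Tm p l).1, p) = ((L.Tm p l').1, p) := by
        rw [← hlab, ← hlab']; exact hEq'
      exact (Prod.mk.inj this).1
    · have r1 := L.link_row p l
      have r2 := L.link_row p l'
      rw [hlk] at r1; rw [hlk'] at r2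
      rw [← r1, ← r2]
  show l < l'
  rcases lt_trichotomy l l' with h | h | h
  · exact h
  · subst h
    rw [hlk] at hlk'
    have := congrArg Prod.snd hlk'
    simp only at this
    exact absurd this (ne_of_lt hlt)
  · have := hL.2.2 p l' l hTmEq.symm h
    rw [hlk, hlk'] at this
    simp only at this
    exact absurd this (asymm hlt)

lemma QSflip_inj (L L' : LinkedPair K r0 r1 cm cp) (h : QSflip L = QSflip L') :
    L = L' := by
  have hTm : L.Tp = L'.Tp := congrArg LinkedPair.Tm h
  have hTp : L.Tm = L'.Tm := congrArg LinkedPair.Tp h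
  have hlk : L.link.symm = L'.link.symm := congrArg LinkedPair.link h
  have hlink : L.link = L'.link := by
    rw [← L.link.symm_symm, ← L'.link.symm_symm, hlk]
  exact QS_ext L L' hTp hTm hlink

end Main

/-- A semi-standard linked tableaux pair is uniquely
determined by either of its two tableaux: if two semi-standard linked pairs
share `T⁻` or share `T⁺`, they are equal (in particular the links agree). -/
theorem statement8 (K r0 r1 : ℕ) (hK : 1 ≤ K) (h0 : 1 ≤ r0) (h1 : 1 ≤ r1)
    {cm cp cm' cp' : ℕ}
    (L : LinkedPair K r0 r1 cm cp) (L' : LinkedPair K r0 r1 cm' cp')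
    (hL : IsSemiStandardPair L) (hL' : IsSemiStandardPair L')
    (h : (cm = cm' ∧ HEq L.Tm L'.Tm) ∨ (cp = cp' ∧ HEq L.Tp L'.Tp)) :
    cm = cm' ∧ cp = cp' ∧ HEq L L' := by
  have hcard : r0 * cm = r1 * cp := by
    have := Fintype.card_congr L.link
    simpa using this
  have hcard' : r0 * cm' = r1 * cp' := by
    have := Fintype.card_congr L'.link
    simpa using this
  rcases h with ⟨hcm, hTm⟩ | ⟨hcp, hTp⟩
  · subst hcm
    have hcp : cp = cp' :=
      Nat.eq_of_mul_eq_mul_left (by omega) (hcard.symm.trans hcard')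
    subst hcp
    have hTmEq : L.Tm = L'.Tm := eq_of_heq hTm
    exact ⟨rfl, rfl, heq_of_eq (QS_main L L' hL hL' hTmEq)⟩
  · subst hcp
    have hcm : cm = cm' :=
      Nat.eq_of_mul_eq_mul_left (by omega) (hcard.trans hcard'.symm)
    subst hcm
    have hTpEq : L.Tp = L'.Tp := eq_of_heq hTp
    have hfl : QSflip L = QSflip L' :=
      QS_main (QSflip L) (QSflip L') (QSflip_ss hL) (QSflip_ss hL') hTpEq
    exact ⟨rfl, rfl, heq_of_eq (QSflip_inj L L' hfl)⟩
end QuiverSAGBI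
end
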